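/- arXiv:2503.24232 — 5 statements merged into one kernel-verified Lean document; each statement's English description precedes it below -/
import Mathlib

section
/- Let P be a polynomial of degree at most m with real coefficients, P(0)=1, P'(0)=1, and |P(x)| ≤ 1 for all x in the interval [-a, 0] with a > 0. Then a ≤ 2m². -/
open Polynomial Finset

noncomputable def chebNode (m k : ℕ) : ℝ := Real.cos (k * Real.pi / m)

lemma chebNode_zero (m : ℕ) : chebNode m 0 = 1 := by simp [chebNode]

lemma chebNode_mem (m k : ℕ) : -1 ≤ chebNode m k ∧ chebNode m k ≤ 1 :=
  ⟨Real.neg_one_le_cos _, Real.cos_le_one _⟩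

lemma chebNode_lt (m : ℕ) (hm : 0 < m) {i j : ℕ} (hij : i < j) (hj : j ≤ m) :
    chebNode m j < chebNode m i := by
  have hpi := Real.pi_pos
  have hm' : (0:ℝ) < m := by exact_mod_cast hm
  apply Real.cos_lt_cos_of_nonneg_of_le_pi
  · positivity
  · rw [div_le_iff₀ hm']
    have : (j:ℝ) ≤ m := by exact_mod_cast hj
    nlinarith [mul_pos hpi hm']
  · have hij' : (i:ℝ) < j := by exact_mod_cast hij
    rw [div_lt_div_iff₀ hm' hm']
    nlinarith [mul_pos hpi hm']

lemma chebNode_lt1 (m : ℕ) (hm : 0 < m) {j : ℕ} (hj1 : 1 ≤ j) (hj : j ≤ m) :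
    chebNode m j < 1 := by
  rw [← chebNode_zero m]; exact chebNode_lt m hm hj1 hj

lemma chebNode_inj (m : ℕ) (hm : 0 < m) :
    Set.InjOn (chebNode m) ↑(Finset.range (m+1)) := by
  intro i hi j hj hij
  simp only [Finset.coe_range, Set.mem_Iio] at hi hj
  rcases lt_trichotomy i j with h | h | h
  · exact absurd hij (ne_of_gt (chebNode_lt m hm h (by omega)))
  · exact h
  · exact absurd hij (ne_of_lt (chebNode_lt m hm h (by omega)))

lemma dbd' (x y : ℝ) : derivative (Lagrange.basisDivisor x y) = C (x - y)⁻¹ := by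
  rw [Lagrange.basisDivisor, derivative_mul]; simp

lemma ebd' (x y z : ℝ) : (Lagrange.basisDivisor x y).eval z = (x - y)⁻¹ * (z - y) := by
  rw [Lagrange.basisDivisor]; simp

noncomputable def dW (m k : ℕ) : ℝ :=
  ((Lagrange.basis (Finset.range (m+1)) (chebNode m) k).derivative).eval 1

lemma basis_eq (s : Finset ℕ) (v : ℕ → ℝ) (k : ℕ) :
    Lagrange.basis s v k = ∏ j ∈ s.erase k, Lagrange.basisDivisor (v k) (v j) := rfl

lemma interp_deriv (m : ℕ) (r : ℕ → ℝ) :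
    ((Lagrange.interpolate (Finset.range (m+1)) (chebNode m) r).derivative).eval 1
      = ∑ k ∈ Finset.range (m+1), r k * dW m k := by
  rw [Lagrange.interpolate_apply, derivative_sum, eval_finset_sum]
  refine Finset.sum_congr rfl fun k _ => ?_
  rw [derivative_C_mul, eval_mul, eval_C, dW]

lemma deriv_fin_prod {ι : Type*} [DecidableEq ι] (s : Finset ι) (f : ι → ℝ[X]) :
    derivative (∏ i ∈ s, f i) = ∑ i ∈ s, (∏ j ∈ s.erase i, f j) * derivative (f i) := by
  induction s using Finset.induction_on with
  | empty => simp
  | @insert a s ha ih =>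
    rw [Finset.prod_insert ha, derivative_mul, ih, Finset.sum_insert ha,
      Finset.erase_insert ha, mul_comm (derivative (f a)), Finset.mul_sum]
    congr 1
    refine Finset.sum_congr rfl (fun i hi => ?_)
    have hai : a ≠ i := fun h => ha (h ▸ hi)
    rw [Finset.erase_insert_of_ne hai, Finset.prod_insert
      (fun h => ha (Finset.mem_of_mem_erase h)), mul_assoc]

lemma dW_eq (m k : ℕ) : dW m k =
    ∑ i ∈ (Finset.range (m+1)).erase k,
      (∏ j ∈ ((Finset.range (m+1)).erase k).erase i,
        ((chebNode m k - chebNode m j)⁻¹ * (1 - chebNode m j)))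
       * (chebNode m k - chebNode m i)⁻¹ := by
  rw [dW, basis_eq, deriv_fin_prod, eval_finset_sum]
  refine Finset.sum_congr rfl fun i _ => ?_
  rw [eval_mul, dbd', eval_C, eval_prod]
  congr 1
  exact Finset.prod_congr rfl fun j _ => ebd' _ _ _

lemma dW_zero (m : ℕ) (hm : 0 < m) :
    dW m 0 = ∑ i ∈ (Finset.range (m+1)).erase 0, (1 - chebNode m i)⁻¹ := by
  rw [dW_eq]
  refine Finset.sum_congr rfl fun i hi => ?_
  rw [chebNode_zero]
  rw [Finset.prod_congr rfl (fun j hj => ?_), Finset.prod_const_one, one_mul]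
  · have hj0 : j ≠ 0 ∧ j ≤ m := by
      simp only [Finset.mem_erase, Finset.mem_range] at hj; omega
    have := chebNode_lt1 m hm (by omega : 1 ≤ j) hj0.2
    rw [inv_mul_cancel₀ (by linarith)]

lemma dW_pos_eq (m : ℕ) (hm : 0 < m) (k : ℕ) (hk1 : 1 ≤ k) (hkm : k ≤ m) :
    dW m k = (∏ j ∈ ((Finset.range (m+1)).erase k).erase 0,
      ((chebNode m k - chebNode m j)⁻¹ * (1 - chebNode m j))) * (chebNode m k - 1)⁻¹ := by
  rw [dW_eq]
  have h0 : (0:ℕ) ∈ (Finset.range (m+1)).erase k := by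
    simp only [Finset.mem_erase, Finset.mem_range]; omega
  rw [Finset.sum_eq_single_of_mem 0 h0]
  · rw [chebNode_zero]
  · intro i hi hine
    have h0i : (0:ℕ) ∈ ((Finset.range (m+1)).erase k).erase i :=
      Finset.mem_erase_of_ne_of_mem (Ne.symm hine) h0
    rw [Finset.prod_eq_zero h0i, zero_mul]
    rw [chebNode_zero]; ring

lemma dW_sign (m : ℕ) (hm : 0 < m) (k : ℕ) (hk : k ≤ m) :
    0 ≤ (-1:ℝ)^k * dW m k := by
  rcases Nat.eq_zero_or_pos k with rfl | hk1
  · rw [pow_zero, one_mul, dW_zero m hm]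
    refine Finset.sum_nonneg fun i hi => ?_
    have hi' : 1 ≤ i ∧ i ≤ m := by
      simp only [Finset.mem_erase, Finset.mem_range] at hi; omega
    have h1 := chebNode_lt1 m hm hi'.1 hi'.2
    have h2 : 0 < 1 - chebNode m i := by linarith
    positivity
  · set g : ℕ → ℝ := fun j => (chebNode m k - chebNode m j)⁻¹ * (1 - chebNode m j) with hg
    have ht : ((Finset.range (m+1)).erase k).erase 0
        = Finset.Ico 1 k ∪ Finset.Ico (k+1) (m+1) := by
      ext j
      simp only [Finset.mem_erase, Finset.mem_range, Finset.mem_union, Finset.mem_Ico]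
      omega
    have hdisj : Disjoint (Finset.Ico 1 k) (Finset.Ico (k+1) (m+1)) := by
      rw [Finset.disjoint_left]
      intro j hj hj'
      simp only [Finset.mem_Ico] at hj hj'
      omega
    have hvk1 : chebNode m k < 1 := chebNode_lt1 m hm hk1 hk
    set A := ∏ j ∈ Finset.Ico 1 k, (-g j) with hA
    set B := ∏ j ∈ Finset.Ico (k+1) (m+1), g j with hB
    set C := (1 - chebNode m k)⁻¹ with hC
    have h2 : (0:ℝ) < B := by
      refine Finset.prod_pos fun j hj => ?_
      simp only [Finset.mem_Ico] at hj
      have hlt : chebNode m j < chebNode m k := chebNode_lt m hm (by omega) (by omega)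
      have hj1 : chebNode m j < 1 := chebNode_lt1 m hm (by omega) (by omega)
      have e1 : 0 < chebNode m k - chebNode m j := by linarith
      have e2 : 0 < 1 - chebNode m j := by linarith
      rw [hg]; positivity
    have h1 : (0:ℝ) < A := by
      refine Finset.prod_pos fun j hj => ?_
      simp only [Finset.mem_Ico] at hj
      have hlt : chebNode m k < chebNode m j := chebNode_lt m hm (by omega) hk
      have hj1 : chebNode m j < 1 := chebNode_lt1 m hm (by omega) (by omega)
      have hd : chebNode m k - chebNode m j < 0 := by linarith
      have hdi : (chebNode m k - chebNode m j)⁻¹ < 0 := inv_neg''.mpr hd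
      have h1j : 0 < 1 - chebNode m j := by linarith
      rw [hg]
      simp only
      nlinarith
    have hCpos : (0:ℝ) < C := by
      have h3 : 0 < 1 - chebNode m k := by linarith
      rw [hC]
      positivity
    set e := (-1:ℝ)^(k-1) with he
    have he2 : e * e = 1 := by
      rw [he, ← pow_add, ← two_mul, pow_mul]; norm_num
    have hk' : (-1:ℝ)^k = -1 * e := by
      rw [he, ← pow_succ']
      congr 1
      omega
    have hgg : ∏ j ∈ Finset.Ico 1 k, g j = e * A := by
      have hpn : A = e * ∏ j ∈ Finset.Ico 1 k, g j := by
        rw [hA, he, ← Nat.card_Ico 1 k, ← Finset.prod_const, ← Finset.prod_mul_distrib]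
        exact Finset.prod_congr rfl fun j _ => by ring
      rw [hpn, ← mul_assoc, he2, one_mul]
    have hinv : (chebNode m k - 1)⁻¹ = -C := by
      rw [hC, show chebNode m k - 1 = -(1 - chebNode m k) by ring, inv_neg]
    have heq : (-1:ℝ)^k * dW m k = A * B * C := by
      rw [dW_pos_eq m hm k hk1 hk, ht, Finset.prod_union hdisj, hgg, hinv, hk']
      linear_combination (A * B * C) * he2
    rw [heq]
    exact (mul_pos (mul_pos h1 h2) hCpos).le

lemma Ueval (n : ℕ) : ((Polynomial.Chebyshev.U ℝ n).eval 1) = n + 1 := by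
  induction n using Nat.twoStepInduction with
  | zero => simp [Polynomial.Chebyshev.U_zero]
  | one => simp [Polynomial.Chebyshev.U_one]; norm_num
  | more n ih1 ih2 =>
    rw [show ((n+2 : ℕ) : ℤ) = ((n:ℤ)+2) by push_cast; ring,
      Polynomial.Chebyshev.U_add_two]
    simp only [eval_sub, eval_mul, eval_ofNat, eval_X]
    rw [show ((n+1 : ℕ) : ℤ) = ((n:ℤ)+1) by push_cast; ring] at ih2
    rw [ih1, ih2]; push_cast; ring
lemma Tdeg (n : ℕ) : (Polynomial.Chebyshev.T ℝ n).degree ≤ n := by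
  induction n using Nat.twoStepInduction with
  | zero => simp [Polynomial.Chebyshev.T_zero]
  | one => simp [Polynomial.Chebyshev.T_one]
  | more n ih1 ih2 =>
    rw [show ((n+2 : ℕ) : ℤ) = ((n:ℤ)+2) by push_cast; ring,
      Polynomial.Chebyshev.T_add_two]
    rw [show ((n+1 : ℕ) : ℤ) = ((n:ℤ)+1) by push_cast; ring] at ih2
    refine le_trans (degree_sub_le _ _) ?_
    simp only [sup_le_iff]
    have h2 : ((2*X : ℝ[X])).degree ≤ 1 := by
      rw [show (2:ℝ[X]) = C 2 from (map_ofNat C 2).symm]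
      refine le_trans (degree_mul_le _ _) ?_
      simpa using add_le_add degree_C_le (le_of_eq (degree_X (R := ℝ)))
    refine ⟨le_trans (degree_mul_le _ _) (le_trans (add_le_add h2 ih2) ?_),
      le_trans ih1 ?_⟩
    · exact_mod_cast by omega
    · exact_mod_cast by omega
lemma Tderiv1 (m : ℕ) (hm : 0 < m) :
    (Polynomial.Chebyshev.T ℝ m).derivative.eval 1 = (m:ℝ)^2 := by
  rw [Polynomial.Chebyshev.T_derivative_eq_U]
  rw [show ((m:ℤ) - 1) = ((m - 1 : ℕ) : ℤ) by omega]
  simp only [eval_mul, Ueval, eval_intCast]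
  push_cast [Nat.cast_sub hm]
  ring

lemma dW_sum (m : ℕ) (hm : 0 < m) :
    ∑ k ∈ Finset.range (m+1), (-1:ℝ)^k * dW m k = (m:ℝ)^2 := by
  have hm' : (m:ℝ) ≠ 0 := by exact_mod_cast hm.ne'
  have hT : Polynomial.Chebyshev.T ℝ m
      = Lagrange.interpolate (Finset.range (m+1)) (chebNode m) (fun k => (-1:ℝ)^k) := by
    apply Lagrange.eq_interpolate_of_eval_eq _ (chebNode_inj m hm)
    · rw [Finset.card_range]
      exact lt_of_le_of_lt (Tdeg m) (by exact_mod_cast by omega)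
    · intro i _
      rw [chebNode, Polynomial.Chebyshev.T_real_cos]
      rw [show (((m:ℤ)):ℝ) * (i * Real.pi / m) = i * Real.pi - 0 by push_cast; field_simp; ring]
      rw [Real.cos_nat_mul_pi_sub 0 i, Real.cos_zero, mul_one]
  have h := interp_deriv m (fun k => (-1:ℝ)^k)
  rw [← hT, Tderiv1 m hm] at h
  exact h.symm

theorem parabolic_stability_limit (m : ℕ) (hm : 0 < m) (P : Polynomial ℝ)
    (hdeg : P.degree ≤ m) (h0 : P.eval 0 = 1) (h1 : P.derivative.eval 0 = 1)
    (a : ℝ) (ha : 0 < a)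
    (hbound : ∀ x ∈ Set.Icc (-a) 0, |P.eval x| ≤ 1) :
    a ≤ 2 * m ^ 2 := by
  set c := a / 2 with hc
  have hc0 : 0 < c := by positivity
  set q : ℝ[X] := C c * X - C c with hq
  set Q : ℝ[X] := P.comp q with hQ
  have hqe : ∀ x : ℝ, q.eval x = c * x - c := by intro x; simp [hq]
  have hQe : ∀ x : ℝ, Q.eval x = P.eval (c * x - c) := by
    intro x; rw [hQ, eval_comp, hqe]
  -- degree bound
  have hPnd : P.natDegree ≤ m := natDegree_le_iff_degree_le.mpr hdeg
  have hqnd : q.natDegree ≤ 1 := by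
    rw [hq, sub_eq_add_neg, ← C_neg]
    exact natDegree_linear_le
  have hQnd : Q.natDegree ≤ m := by
    refine le_trans natDegree_comp_le ?_
    calc P.natDegree * q.natDegree ≤ m * 1 := Nat.mul_le_mul hPnd hqnd
    _ = m := by omega
  have hQdeg : Q.degree < (Finset.range (m+1)).card := by
    rw [Finset.card_range]
    refine lt_of_le_of_lt degree_le_natDegree ?_
    exact_mod_cast by omega
  -- derivative at 1
  have hQd1 : Q.derivative.eval 1 = c := by
    rw [hQ, derivative_comp, eval_mul, eval_comp, hqe]
    rw [show c * 1 - c = 0 by ring, h1]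
    rw [hq, derivative_sub, derivative_C, sub_zero, derivative_C_mul_X, eval_C]
    ring
  -- values bounded
  have hvals : ∀ k ∈ Finset.range (m+1), |Q.eval (chebNode m k)| ≤ 1 := by
    intro k _
    rw [hQe]
    apply hbound
    have h1 := (chebNode_mem m k).1
    have h2 := (chebNode_mem m k).2
    constructor
    · rw [hc]; nlinarith
    · nlinarith
  -- interpolation
  have hint : Q = Lagrange.interpolate (Finset.range (m+1)) (chebNode m)
      (fun k => Q.eval (chebNode m k)) :=
    Lagrange.eq_interpolate (chebNode_inj m hm) hQdeg
  have hkey : c ≤ (m:ℝ)^2 := by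
    have e1 : c = ∑ k ∈ Finset.range (m+1), Q.eval (chebNode m k) * dW m k := by
      rw [← interp_deriv m (fun k => Q.eval (chebNode m k)), ← hint, hQd1]
    rw [e1, ← dW_sum m hm]
    refine Finset.sum_le_sum fun k hk => ?_
    have hkm : k ≤ m := by simp only [Finset.mem_range] at hk; omega
    have hsgn := dW_sign m hm k hkm
    have habs : |dW m k| = (-1:ℝ)^k * dW m k := by
      rw [← abs_of_nonneg hsgn, abs_mul, abs_pow, abs_neg, abs_one, one_pow, one_mul]
    calc Q.eval (chebNode m k) * dW m k ≤ |Q.eval (chebNode m k) * dW m k| := le_abs_self _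
    _ = |Q.eval (chebNode m k)| * |dW m k| := abs_mul _ _
    _ ≤ 1 * |dW m k| := by
        have := hvals k hk
        have := abs_nonneg (dW m k)
        nlinarith
    _ = (-1:ℝ)^k * dW m k := by rw [one_mul, habs]
  rw [hc] at hkey
  norm_num
  linarith
end

section
/- The polynomial P(z) = T_m(1 + z/m²), where T_m is the m-th Chebyshev polynomial of the first kind, satisfies P(0) = 1, P'(0) = 1, and |P(x)| ≤ 1 for all x in [-2m², 0]. -/
open Polynomial Polynomial.Chebyshev Real

lemma U_eval_one_nat : ∀ k : ℕ, (U ℝ (k : ℤ)).eval 1 = k + 1 ∧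
    (U ℝ ((k : ℤ) + 1)).eval 1 = k + 2 := by
  intro k
  induction k with
  | zero => simp [U_zero, U_one]
  | succ n ih =>
    obtain ⟨h1, h2⟩ := ih
    refine ⟨by push_cast; linarith [h2], ?_⟩
    have := U_add_two ℝ n
    have h3 : ((n : ℤ) + 1 + 1) = (n : ℤ) + 2 := by ring
    rw [show ((n : ℕ) + 1 : ℕ) = (n + 1 : ℕ) from rfl]
    push_cast
    rw [h3, this]
    simp only [eval_sub, eval_mul, eval_ofNat, eval_X, eval_one]
    push_cast at h1 h2
    rw [show (n : ℤ) + 1 = ((n : ℤ) + 1) from rfl]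
    have h2' : (U ℝ ((n : ℤ) + 1)).eval 1 = n + 2 := h2
    linarith [h2']

lemma T_eval_one (n : ℤ) : (T ℝ n).eval 1 = 1 := by
  have := T_real_cos 0 n
  simpa using this

theorem chebyshev_parabolic_optimal (m : ℕ) (hm : 0 < m) (P : ℝ → ℝ)
    (hP : ∀ x, P x = (Polynomial.Chebyshev.T ℝ m).eval (1 + x / (m : ℝ) ^ 2)) :
    P 0 = 1 ∧ deriv P 0 = 1 ∧ ∀ x ∈ Set.Icc (-(2 * (m : ℝ) ^ 2)) 0, |P x| ≤ 1 := by
  have hm2 : (0:ℝ) < (m : ℝ) ^ 2 := by positivity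
  refine ⟨by simp [hP, _root_.T_eval_one], ?_, ?_⟩
  · have hfun : P = fun x => (T ℝ m).eval (1 + x / (m : ℝ) ^ 2) := funext hP
    have hd : HasDerivAt (fun x : ℝ => 1 + x / (m : ℝ) ^ 2) (1 / (m : ℝ) ^ 2) 0 := by
      simpa using ((hasDerivAt_id (0:ℝ)).div_const ((m:ℝ)^2)).const_add 1
    have hcomp : HasDerivAt P
        ((Polynomial.derivative (T ℝ m)).eval (1 + 0 / (m:ℝ)^2) * (1 / (m : ℝ) ^ 2)) 0 := by
      rw [hfun]
      exact (Polynomial.hasDerivAt (T ℝ m) _).comp 0 hd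
    rw [hcomp.deriv]
    have hderT : (Polynomial.derivative (T ℝ m)).eval 1 = (m : ℝ) ^ 2 := by
      rw [T_derivative_eq_U]
      have hk : ((m : ℤ) - 1) = ((m - 1 : ℕ) : ℤ) := by
        omega
      rw [hk]
      simp only [eval_mul, eval_intCast, (U_eval_one_nat (m-1)).1]
      push_cast [Nat.cast_sub hm]
      ring
    rw [show (1 + 0 / (m:ℝ)^2) = 1 by ring, hderT]
    field_simp
  · intro x hx
    obtain ⟨hx1, hx2⟩ := hx
    set y := 1 + x / (m : ℝ) ^ 2 with hy
    have hy1 : -1 ≤ y := by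
      have h : -(2:ℝ) ≤ x / (m:ℝ)^2 := by
        rw [le_div_iff₀ hm2]; linarith
      rw [hy]; linarith
    have hy2 : y ≤ 1 := by
      have h : x / (m:ℝ)^2 ≤ 0 := div_nonpos_of_nonpos_of_nonneg hx2 hm2.le
      rw [hy]; linarith
    rw [hP, ← hy, ← Real.cos_arccos hy1 hy2, T_real_cos]
    exact Real.abs_cos_le_one _
end

section
/- Let Q be a real polynomial of degree at most m satisfying |Q(μ)| ≤ 1 for all μ ∈ [-1,1] and Q'(1) = m². Then Q = T_m, the Chebyshev polynomial of the first kind of degree m. -/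
open Polynomial Finset Real


lemma derivative_finset_prod (s : Finset ℕ) (f : ℕ → ℝ[X]) :
    derivative (∏ i ∈ s, f i) = ∑ i ∈ s, (∏ a ∈ s.erase i, f a) * derivative (f i) := by
  classical
  rw [Finset.prod_eq_multiset_prod, Polynomial.derivative_prod, Finset.sum_eq_multiset_sum]
  exact congrArg Multiset.sum (Multiset.map_congr rfl fun i hi => by
    rw [Finset.prod_eq_multiset_prod, Finset.erase_val])


lemma cheb_U_eval_one (n : ℕ) : (Polynomial.Chebyshev.U ℝ (n : ℤ)).eval 1 = n + 1 := by
  induction n using Nat.twoStepInduction with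
  | zero => simp
  | one => norm_num [Polynomial.Chebyshev.U_one]
  | more n ih1 ih2 =>
    rw [show ((n+2:ℕ):ℤ) = (n:ℤ)+2 by push_cast; ring, Polynomial.Chebyshev.U_add_two]
    simp only [eval_sub, eval_mul, eval_X, eval_ofNat]
    rw [show ((n:ℤ)+1) = ((n+1:ℕ):ℤ) by push_cast; ring]
    rw [ih1, ih2]
    push_cast; ring

lemma cheb_T_degree_le (n : ℕ) : (Polynomial.Chebyshev.T ℝ (n : ℤ)).degree ≤ n := by
  induction n using Nat.twoStepInduction with
  | zero => simp [Polynomial.Chebyshev.T_zero]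
  | one => simpa [Polynomial.Chebyshev.T_one] using degree_X_le
  | more n ih1 ih2 =>
    rw [show ((n+2:ℕ):ℤ) = (n:ℤ)+2 by push_cast; ring, Polynomial.Chebyshev.T_add_two]
    apply le_trans (degree_sub_le _ _)
    apply max_le
    · apply le_trans (degree_mul_le _ _)
      have h1 : (2 * X : ℝ[X]).degree ≤ 1 := by compute_degree
      have h2 : (Polynomial.Chebyshev.T ℝ ((n:ℤ)+1)).degree ≤ ((n+1 : ℕ) : WithBot ℕ) := by
        rw [show (n:ℤ)+1 = ((n+1:ℕ):ℤ) by push_cast; ring]; exact ih2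
      calc (2*X : ℝ[X]).degree + (Polynomial.Chebyshev.T ℝ ((n:ℤ)+1)).degree
          ≤ 1 + ((n+1 : ℕ) : WithBot ℕ) := add_le_add h1 h2
        _ ≤ ((n+2 : ℕ) : WithBot ℕ) := by
            rw [show ((n+2:ℕ) : WithBot ℕ) = ((1:ℕ) : WithBot ℕ) + ((n+1:ℕ) : WithBot ℕ) by
              push_cast; ring]
            exact le_refl _
    · exact le_trans ih1 (by exact_mod_cast WithBot.coe_le_coe.2 (by omega))

lemma prod_neg_sign {s : Finset ℕ} {g : ℕ → ℝ} (h : ∀ a ∈ s, g a < 0) :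
    0 < (-1 : ℝ)^s.card * ∏ a ∈ s, g a := by
  have h1 : (0:ℝ) < ∏ a ∈ s, (-g a) := Finset.prod_pos (fun a ha => neg_pos.2 (h a ha))
  have h2 : ∏ a ∈ s, (-g a) = (-1:ℝ)^s.card * ∏ a ∈ s, g a := by
    rw [show (fun a => -g a) = (fun a => (-1:ℝ) * g a) by funext a; ring]
    rw [Finset.prod_mul_distrib, Finset.prod_const]
  linarith [h2 ▸ h1]


noncomputable def nodev (m : ℕ) : ℕ → ℝ := fun k => Real.cos (k * Real.pi / m)

lemma nodev_zero (m : ℕ) : nodev m 0 = 1 := by simp [nodev]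

lemma nodev_mem (m k : ℕ) : nodev m k ∈ Set.Icc (-1:ℝ) 1 :=
  ⟨Real.neg_one_le_cos _, Real.cos_le_one _⟩

lemma nodev_anti {m : ℕ} (hm : 0 < m) {j k : ℕ} (hj : j < k) (hk : k ≤ m) :
    nodev m k < nodev m j := by
  have hπ := Real.pi_pos
  have hm' : (0:ℝ) < m := by exact_mod_cast hm
  have hkm : (k:ℝ) ≤ m := by exact_mod_cast hk
  have hjm : (j:ℝ) ≤ m := by exact_mod_cast (le_of_lt (lt_of_lt_of_le hj hk))
  have hjk : (j:ℝ) < k := by exact_mod_cast hj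
  apply Real.strictAntiOn_cos ⟨by positivity, by rw [div_le_iff₀ hm']; nlinarith⟩
    ⟨by positivity, by rw [div_le_iff₀ hm']; nlinarith⟩
  rw [div_lt_div_iff_of_pos_right hm']
  nlinarith

lemma nodev_inj {m : ℕ} (hm : 0 < m) : Set.InjOn (nodev m) (range (m+1) : Finset ℕ) := by
  intro a ha b hb hab
  simp only [coe_range, Set.mem_Iio] at ha hb
  by_contra hne
  rcases lt_or_gt_of_ne hne with h | h
  · exact absurd hab (ne_of_gt (nodev_anti hm h (by omega)))
  · exact absurd hab (ne_of_lt (nodev_anti hm h (by omega)))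

lemma nodev_T {m : ℕ} (hm : 0 < m) (k : ℕ) :
    (Polynomial.Chebyshev.T ℝ (m:ℤ)).eval (nodev m k) = (-1:ℝ)^k := by
  have hm' : (m:ℝ) ≠ 0 := by positivity
  rw [show nodev m k = Real.cos (k * Real.pi / m) from rfl, Polynomial.Chebyshev.T_real_cos]
  rw [show ((m:ℤ):ℝ) * (k * Real.pi / m) = k * Real.pi by push_cast; field_simp]
  simpa using Real.cos_nat_mul_pi_sub 0 k


noncomputable def dcoef (m : ℕ) (i : ℕ) : ℝ :=
  ((Lagrange.basis (range (m+1)) (nodev m) i).derivative).eval 1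

lemma dcoef_eq (m i : ℕ) :
    dcoef m i = ∑ b ∈ (range (m+1)).erase i,
      (∏ a ∈ ((range (m+1)).erase i).erase b,
        ((nodev m i - nodev m a)⁻¹ * (1 - nodev m a))) * (nodev m i - nodev m b)⁻¹ := by
  unfold dcoef Lagrange.basis
  rw [derivative_finset_prod, eval_finset_sum]
  apply Finset.sum_congr rfl
  intro b hb
  rw [eval_mul, eval_prod]
  congr 1
  · apply Finset.prod_congr rfl; intro a ha
    simp [Lagrange.basisDivisor]
  · simp [Lagrange.basisDivisor, derivative_mul]

lemma dcoef_sign {m : ℕ} (hm : 0 < m) {i : ℕ} (hi : i ≤ m) :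
    0 < (-1:ℝ)^i * dcoef m i := by
  have hlt : ∀ a : ℕ, 0 < a → a ≤ m → nodev m a < 1 := by
    intro a h0 h1
    simpa [nodev_zero] using nodev_anti hm h0 h1
  rcases Nat.eq_zero_or_pos i with rfl | hi0
  · simp only [pow_zero, one_mul, dcoef_eq]
    apply Finset.sum_pos
    · intro b hb
      simp only [mem_erase, mem_range] at hb
      apply mul_pos
      · apply Finset.prod_pos
        intro a ha
        simp only [mem_erase, mem_range] at ha
        have h1a : nodev m a < 1 := hlt a (by omega) (by omega)
        rw [nodev_zero]
        exact mul_pos (inv_pos.2 (by linarith)) (by linarith)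
      · rw [nodev_zero]
        exact inv_pos.2 (by linarith [hlt b (by omega) (by omega)])
    · exact ⟨1, by simp [mem_erase]; omega⟩
  · rw [dcoef_eq]
    rw [Finset.sum_eq_single_of_mem 0 (by simp [mem_erase]; omega) ?side]
    case side =>
      intro b hb hb0
      simp only [mem_erase, mem_range] at hb
      apply mul_eq_zero_of_left
      apply Finset.prod_eq_zero (i := 0) (by simp [mem_erase]; omega)
      rw [nodev_zero]; ring
    set A := (((range (m+1)).erase i).erase 0) with hA
    set f : ℕ → ℝ := fun a => (nodev m i - nodev m a)⁻¹ * (1 - nodev m a) with hf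
    have hsplit : ∏ a ∈ A, f a =
        (∏ a ∈ A.filter (· < i), f a) * ∏ a ∈ A.filter (¬ · < i), f a :=
      (Finset.prod_filter_mul_prod_filter_not A _ f).symm
    have hAlt : A.filter (· < i) = Ioo 0 i := by
      ext a; simp [hA, mem_erase, Finset.mem_Ioo]; omega
    have hcard : (A.filter (· < i)).card = i - 1 := by
      rw [hAlt, Nat.card_Ioo]; omega
    have hp1 : 0 < (-1:ℝ)^(i-1) * ∏ a ∈ A.filter (· < i), f a := by
      rw [← hcard] at *
      apply prod_neg_sign
      intro a ha
      rw [hAlt] at ha; rw [Finset.mem_Ioo] at ha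
      have hva : nodev m i < nodev m a := nodev_anti hm ha.2 hi
      have h1a : nodev m a < 1 := hlt a ha.1 (by omega)
      exact mul_neg_of_neg_of_pos (inv_neg''.2 (by linarith)) (by linarith)
    have hp2 : 0 < ∏ a ∈ A.filter (¬ · < i), f a := by
      apply Finset.prod_pos
      intro a ha
      simp only [Finset.mem_filter, hA, mem_erase, mem_range] at ha
      have hia : i < a := by omega
      have hva : nodev m a < nodev m i := nodev_anti hm hia (by omega)
      have h1a : nodev m a < 1 := hlt a (by omega) (by omega)
      exact mul_pos (inv_pos.2 (by linarith)) (by linarith)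
    have hp3 : (0:ℝ) < -(nodev m i - nodev m 0)⁻¹ := by
      rw [nodev_zero]
      have := hlt i hi0 hi
      simpa using inv_neg''.2 (by linarith : nodev m i - 1 < 0)
    have hpow : (-1:ℝ)^i = (-1)^(i-1) * (-1) := by
      rw [← pow_succ]; congr 1; omega
    calc (0:ℝ) < ((-1:ℝ)^(i-1) * ∏ a ∈ A.filter (· < i), f a) *
          ((∏ a ∈ A.filter (¬ · < i), f a) * (-(nodev m i - nodev m 0)⁻¹)) :=
            mul_pos hp1 (mul_pos hp2 hp3)
      _ = (-1:ℝ)^i * ((∏ a ∈ A, f a) * (nodev m i - nodev m 0)⁻¹) := by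
            rw [hsplit, hpow]; ring


lemma deriv_eval_one_eq {m : ℕ} (hm : 0 < m) {P : ℝ[X]} (hP : P.degree < ((m+1 : ℕ) : WithBot ℕ)) :
    P.derivative.eval 1 = ∑ i ∈ range (m+1), P.eval (nodev m i) * dcoef m i := by
  have hinj := nodev_inj hm
  have h := Lagrange.eq_interpolate hinj (by rwa [card_range])
  conv_lhs => rw [h]
  rw [Lagrange.interpolate_apply, derivative_sum, eval_finset_sum]
  apply Finset.sum_congr rfl
  intro i hi
  rw [derivative_C_mul, eval_mul, eval_C]
  rfl

lemma cheb_T_deriv_one {m : ℕ} (hm : 0 < m) :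
    (Polynomial.Chebyshev.T ℝ (m:ℤ)).derivative.eval 1 = (m:ℝ)^2 := by
  rw [Polynomial.Chebyshev.T_derivative_eq_U]
  rw [show (m:ℤ) - 1 = ((m-1:ℕ):ℤ) by omega]
  rw [eval_mul, cheb_U_eval_one]
  have : ((m:ℝ) - 1) + 1 = m := by ring
  rw [show ((m-1:ℕ):ℝ) = (m:ℝ) - 1 by push_cast [Nat.cast_sub hm]; ring]
  simp; ring

theorem markov_extremal (m : ℕ) (hm : 0 < m) (Q : Polynomial ℝ)
    (hdeg : Q.degree ≤ m)
    (hbound : ∀ μ ∈ Set.Icc (-1 : ℝ) 1, |Q.eval μ| ≤ 1)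
    (hderiv : Q.derivative.eval 1 = (m : ℝ) ^ 2) :
    Q = Polynomial.Chebyshev.T ℝ m := by
  set P : ℝ[X] := Polynomial.Chebyshev.T ℝ (m:ℤ) - Q with hPdef
  have hPdeg : P.degree < ((m+1 : ℕ) : WithBot ℕ) := by
    apply lt_of_le_of_lt (degree_sub_le _ _)
    apply lt_of_le_of_lt (max_le (cheb_T_degree_le m) hdeg)
    exact_mod_cast WithBot.coe_lt_coe.2 (by omega)
  have hP1 : P.derivative.eval 1 = 0 := by
    rw [hPdef, derivative_sub, eval_sub, cheb_T_deriv_one hm, hderiv]; ring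
  have hkey := (deriv_eval_one_eq hm hPdeg).symm.trans hP1
  have hnonneg : ∀ i ∈ range (m+1), 0 ≤ P.eval (nodev m i) * dcoef m i := by
    intro i hi
    rw [mem_range] at hi
    have hsq : ((-1:ℝ)^i) * ((-1:ℝ)^i) = 1 := by
      rw [← pow_add]; exact Even.neg_one_pow ⟨i, rfl⟩
    have hterm : P.eval (nodev m i) * dcoef m i =
        ((-1:ℝ)^i * P.eval (nodev m i)) * ((-1:ℝ)^i * dcoef m i) := by
      rw [show ((-1:ℝ)^i * P.eval (nodev m i)) * ((-1:ℝ)^i * dcoef m i)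
        = (((-1:ℝ)^i) * ((-1:ℝ)^i)) * (P.eval (nodev m i) * dcoef m i) by ring, hsq, one_mul]
    rw [hterm]
    apply mul_nonneg _ (le_of_lt (dcoef_sign hm (by omega)))
    rw [hPdef, eval_sub, nodev_T hm, mul_sub, hsq]
    have hb := hbound (nodev m i) (nodev_mem m i)
    have : (-1:ℝ)^i * Q.eval (nodev m i) ≤ 1 := by
      calc (-1:ℝ)^i * Q.eval (nodev m i) ≤ |(-1:ℝ)^i * Q.eval (nodev m i)| := le_abs_self _
        _ = |Q.eval (nodev m i)| := by rw [abs_mul, abs_pow, abs_neg, abs_one, one_pow, one_mul]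
        _ ≤ 1 := hb
    linarith
  have hzero : ∀ i ∈ range (m+1), P.eval (nodev m i) * dcoef m i = 0 :=
    (Finset.sum_eq_zero_iff_of_nonneg hnonneg).1 hkey
  have hPzero : P = 0 := by
    apply Polynomial.eq_zero_of_degree_lt_of_eval_index_eq_zero _ (nodev_inj hm)
      (by rwa [card_range])
    intro i hi
    have h0 := hzero i hi
    rw [mem_range] at hi
    have hd : dcoef m i ≠ 0 := by
      intro h
      have := dcoef_sign hm (show i ≤ m by omega)
      rw [h, mul_zero] at this; exact lt_irrefl _ this
    exact (mul_eq_zero.1 h0).resolve_right hd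
  exact (sub_eq_zero.1 hPzero).symm
end

section
/- Let P(z) = 1 + z + α z² + O(z³) be a complex polynomial with real coefficients up to order 2 coefficient α ∈ ℝ, and suppose |P(i√y)| ≤ 1 for all y in some interval [0, a] with a > 0. Then α ≥ 1/2. -/
open Polynomial Complex

theorem hyperbolic_alpha_lower_bound (P : Polynomial ℂ) (α : ℝ)
    (h0 : P.eval 0 = 1) (h1 : P.coeff 1 = 1) (h2 : P.coeff 2 = (α : ℂ))
    (a : ℝ) (ha : 0 < a)
    (hbound : ∀ y ∈ Set.Icc (0 : ℝ) a,
      ‖P.eval (Complex.I * Real.sqrt y)‖ ≤ 1) :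
    (1 : ℝ) / 2 ≤ α := by
  have h0' : P.coeff 0 = 1 := by rwa [Polynomial.coeff_zero_eq_eval_zero]
  set Q0 : Polynomial ℂ :=
    Polynomial.C 1 + Polynomial.X + Polynomial.C (α:ℂ) * Polynomial.X ^ 2 with hQ0
  have hdvd : Polynomial.X ^ 3 ∣ P - Q0 := by
    rw [Polynomial.X_pow_dvd_iff]
    intro d hd
    interval_cases d <;>
      simp [hQ0, Polynomial.coeff_add, Polynomial.coeff_C, Polynomial.coeff_X,
        Polynomial.coeff_C_mul, Polynomial.coeff_X_pow, h0', h1, h2, Polynomial.coeff_one]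
  obtain ⟨R, hR⟩ := hdvd
  -- continuous function to bound
  have hcont : Continuous fun y : ℝ => ‖R.eval (Complex.I * Real.sqrt y)‖ :=
    continuous_norm.comp (R.continuous.comp
      (continuous_const.mul (Complex.continuous_ofReal.comp Real.continuous_sqrt)))
  obtain ⟨y0, _, hM'⟩ := isCompact_Icc.exists_isMaxOn (Set.nonempty_Icc.2 ha.le)
    hcont.continuousOn
  have hM : ∀ y ∈ Set.Icc (0:ℝ) a, ‖R.eval (Complex.I * Real.sqrt y)‖
      ≤ ‖R.eval (Complex.I * Real.sqrt y0)‖ := fun y hy => hM' hy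
  set M : ℝ := ‖R.eval (Complex.I * Real.sqrt y0)‖ with hMdef
  have hM0 : 0 ≤ M := norm_nonneg _
  -- key estimate
  have key : ∀ y : ℝ, 0 < y → y ≤ a → 1 - 2 * α ≤ 2 * M * Real.sqrt y + M ^ 2 * y ^ 2 := by
    intro y hy hya
    set t : ℝ := Real.sqrt y with htdef
    have ht0 : 0 ≤ t := Real.sqrt_nonneg y
    have ht2 : t ^ 2 = y := Real.sq_sqrt hy.le
    set z : ℂ := Complex.I * (t : ℂ) with hzdef
    have hz2 : z ^ 2 = -(y : ℂ) := by
      rw [hzdef, mul_pow, Complex.I_sq]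
      push_cast [← ht2]
      ring
    have hPz : P.eval z = ((1 - α * y : ℝ) : ℂ) + (t : ℝ) * Complex.I
        + z ^ 3 * R.eval z := by
      have hP : P = Q0 + Polynomial.X ^ 3 * R := by
        rw [← hR]; ring
      rw [hP]
      simp only [Polynomial.eval_add, Polynomial.eval_mul, Polynomial.eval_pow,
        Polynomial.eval_X, Polynomial.eval_C, hQ0]
      have : (z : ℂ) ^ 2 = -(y : ℂ) := hz2
      rw [this, hzdef]
      push_cast
      ring
    set w : ℂ := z ^ 3 * R.eval z with hwdef
    have hwabs : ‖w‖ ≤ M * t ^ 3 := by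
      have hz_abs : ‖z‖ = t := by
        rw [hzdef, norm_mul, Complex.norm_I, Complex.norm_real, Real.norm_eq_abs, one_mul,
          _root_.abs_of_nonneg ht0]
      have hRb : ‖R.eval z‖ ≤ M := by
        have := hM y ⟨hy.le, hya⟩
        simpa [hzdef, htdef] using this
      calc ‖w‖ = (‖z‖) ^ 3 * ‖R.eval z‖ := by
            simp [hwdef, norm_mul, norm_pow]
        _ ≤ t ^ 3 * M := by
            rw [hz_abs]
            exact mul_le_mul_of_nonneg_left hRb (by positivity)
        _ = M * t ^ 3 := by ring
    have hc : ‖((1 - α * y : ℝ) : ℂ) + (t : ℝ) * Complex.I‖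
        ≤ 1 + M * t ^ 3 := by
      have hb := hbound y ⟨hy.le, hya⟩
      have hb' : ‖P.eval z‖ ≤ 1 := by simpa [hzdef, htdef] using hb
      calc ‖((1 - α * y : ℝ) : ℂ) + (t : ℝ) * Complex.I‖
          = ‖P.eval z - w‖ := by rw [hPz]; ring_nf
        _ ≤ ‖P.eval z‖ + ‖w‖ := by
            simpa [sub_eq_add_neg] using norm_add_le (P.eval z) (-w)
        _ ≤ 1 + M * t ^ 3 := add_le_add hb' hwabs
    have hcsq : (1 - α * y) ^ 2 + y ≤ (1 + M * t ^ 3) ^ 2 := by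
      have habs : ‖((1 - α * y : ℝ) : ℂ) + (t : ℝ) * Complex.I‖
          = Real.sqrt ((1 - α * y) ^ 2 + t ^ 2) := Complex.norm_add_mul_I _ _
      rw [habs] at hc
      have h2' : (0:ℝ) ≤ (1 - α * y) ^ 2 + t ^ 2 := by positivity
      nlinarith [Real.sq_sqrt h2', Real.sqrt_nonneg ((1 - α * y) ^ 2 + t ^ 2), hc, ht2]
    -- expand and divide by y
    have ht3 : t ^ 3 = t * y := by rw [← ht2]; ring
    rw [ht3] at hcsq
    have hty : (t * y) ^ 2 = y ^ 3 := by rw [mul_pow, ht2]; ring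
    have hmul : (1 - 2 * α) * y ≤ (2 * M * t + M ^ 2 * y ^ 2) * y := by
      nlinarith [sq_nonneg (α * y), hy, hty, hcsq]
    have := le_of_mul_le_mul_right hmul hy
    linarith
  -- conclude via ε argument
  have hfin : 1 - 2 * α ≤ 0 := by
    by_contra h
    push_neg at h
    set ε : ℝ := 1 - 2 * α with hε
    have hε0 : 0 < ε := h
    set K : ℝ := 2 * M + M ^ 2 + 1 with hK
    have hK0 : 0 < K := by positivity
    set y : ℝ := min (min a 1) ((ε / (2 * K)) ^ 2) with hy
    have hy0 : 0 < y := by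
      apply lt_min (lt_min ha one_pos)
      positivity
    have hya : y ≤ a := le_trans (min_le_left _ _) (min_le_left _ _)
    have hy1 : y ≤ 1 := le_trans (min_le_left _ _) (min_le_right _ _)
    set δ : ℝ := ε / (2 * K) with hδdef
    have hδ0 : 0 < δ := by positivity
    have hδε : 2 * K * δ = ε := by
      rw [hδdef]; field_simp
    have hsq : Real.sqrt y ≤ δ := by
      calc Real.sqrt y ≤ Real.sqrt (δ ^ 2) :=
            Real.sqrt_le_sqrt (min_le_right _ _)
        _ = δ := Real.sqrt_sq hδ0.le
    have hsqnn : 0 ≤ Real.sqrt y := Real.sqrt_nonneg y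
    have hy2 : y ^ 2 ≤ Real.sqrt y := by
      have h1 : y ≤ Real.sqrt y := by
        nlinarith [Real.sq_sqrt hy0.le, sq_nonneg (Real.sqrt y - 1)]
      nlinarith
    have := key y hy0 hya
    nlinarith [mul_nonneg hM0 (sub_nonneg.2 hsq), mul_nonneg (sq_nonneg M) (sub_nonneg.2 hsq),
      mul_pos hK0 hδ0]
  linarith
end

section
/- Fix k ≥ 1 and let P(z) = T_k(1 + z²/(2k²)) + (z/k)(1 + z²/(4k²)) U_{k-1}(1 + z²/(2k²)). Then P(0) = 1, P'(0) = 1, and |P(iy)| ≤ 1 for all real y with |y| ≤ 2k. -/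
open Polynomial Chebyshev in
lemma Ueval1 : ∀ n : ℕ, (Polynomial.Chebyshev.U ℂ (n : ℤ)).eval 1 = n + 1 := by
  intro n
  induction n using Nat.twoStepInduction with
  | zero => simp [Polynomial.Chebyshev.U_zero]
  | one => simp [Polynomial.Chebyshev.U_one]; norm_num
  | more n ih1 ih2 =>
    have h : ((n : ℤ) + 2) = ((n : ℤ) + 1) + 1 := by ring
    push_cast
    rw [h, Polynomial.Chebyshev.U_add_one]
    push_cast at ih1 ih2
    simp only [Polynomial.eval_sub, Polynomial.eval_mul, Polynomial.eval_ofNat,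
      Polynomial.eval_X]
    rw [show ((n : ℤ) + 1) - 1 = (n : ℤ) by ring] at *
    rw [ih1, ih2]
    ring

theorem odd_hyperbolic_optimal_polynomial (k : ℕ) (hk : 1 ≤ k) (P : ℂ → ℂ)
    (hP : ∀ z : ℂ, P z =
      (Polynomial.Chebyshev.T ℂ k).eval (1 + z ^ 2 / (2 * (k : ℂ) ^ 2)) +
      (z / k) * (1 + z ^ 2 / (4 * (k : ℂ) ^ 2)) *
        (Polynomial.Chebyshev.U ℂ ((k : ℤ) - 1)).eval (1 + z ^ 2 / (2 * (k : ℂ) ^ 2))) :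
    P 0 = 1 ∧ deriv P 0 = 1 ∧
    ∀ y : ℝ, |y| ≤ 2 * k → ‖P (Complex.I * y)‖ ≤ 1 := by
  have hkc : (k : ℂ) ≠ 0 := Nat.cast_ne_zero.mpr (by omega)
  have hT1 : (Polynomial.Chebyshev.T ℂ (k : ℤ)).eval 1 = 1 := by
    have := Polynomial.Chebyshev.T_complex_cos 0 (k : ℤ)
    simpa using this
  have hU1 : (Polynomial.Chebyshev.U ℂ ((k : ℤ) - 1)).eval 1 = (k : ℂ) := by
    obtain ⟨m, rfl⟩ : ∃ m, k = m + 1 := ⟨k - 1, by omega⟩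
    have h := Ueval1 m
    rw [show ((m + 1 : ℕ) : ℤ) - 1 = (m : ℤ) by push_cast; ring, h]
    push_cast; ring
  refine ⟨?_, ?_, ?_⟩
  · rw [hP 0]
    simp [hT1]
  · have hPf : P = fun z : ℂ =>
        (Polynomial.Chebyshev.T ℂ k).eval (1 + z ^ 2 / (2 * (k : ℂ) ^ 2)) +
        (z / k) * (1 + z ^ 2 / (4 * (k : ℂ) ^ 2)) *
          (Polynomial.Chebyshev.U ℂ ((k : ℤ) - 1)).eval (1 + z ^ 2 / (2 * (k : ℂ) ^ 2)) :=
      funext hP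
    have hg : HasDerivAt (fun z : ℂ => 1 + z ^ 2 / (2 * (k : ℂ) ^ 2)) 0 0 := by
      have := ((hasDerivAt_pow 2 (0 : ℂ)).div_const (2 * (k : ℂ) ^ 2)).const_add 1
      simpa using this
    have hg2 : HasDerivAt (fun z : ℂ => 1 + z ^ 2 / (4 * (k : ℂ) ^ 2)) 0 0 := by
      have := ((hasDerivAt_pow 2 (0 : ℂ)).div_const (4 * (k : ℂ) ^ 2)).const_add 1
      simpa using this
    have hA : HasDerivAt
        (fun z : ℂ => (Polynomial.Chebyshev.T ℂ k).eval (1 + z ^ 2 / (2 * (k : ℂ) ^ 2))) 0 0 := by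
      have := ((Polynomial.Chebyshev.T ℂ k).hasDerivAt
        (1 + (0 : ℂ) ^ 2 / (2 * (k : ℂ) ^ 2))).comp 0 hg
      simpa [Function.comp_def] using this
    have hU : HasDerivAt
        (fun z : ℂ => (Polynomial.Chebyshev.U ℂ ((k : ℤ) - 1)).eval
          (1 + z ^ 2 / (2 * (k : ℂ) ^ 2))) 0 0 := by
      have := ((Polynomial.Chebyshev.U ℂ ((k : ℤ) - 1)).hasDerivAt
        (1 + (0 : ℂ) ^ 2 / (2 * (k : ℂ) ^ 2))).comp 0 hg
      simpa [Function.comp_def] using this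
    have hf1 : HasDerivAt (fun z : ℂ => z / (k : ℂ)) (1 / k) 0 := by
      simpa using (hasDerivAt_id (0 : ℂ)).div_const (k : ℂ)
    have hB := (hf1.mul hg2).mul hU
    have hF := hA.add hB
    simp only [Pi.add_def, Pi.mul_def] at hF
    rw [hPf, hF.deriv]
    simp only [zero_div, ne_eq, OfNat.ofNat_ne_zero, not_false_eq_true, zero_pow, zero_add,
      mul_zero, add_zero, mul_one, zero_mul]
    rw [hU1]
    field_simp
  · intro y hy
    have hk0 : (0 : ℝ) < k := by exact_mod_cast hk
    set s : ℝ := y / (2 * k) with hs_def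
    have hs : |s| ≤ 1 := by
      rw [hs_def, abs_div, abs_of_pos (by linarith : (0:ℝ) < 2 * k), div_le_one (by linarith)]
      exact hy
    have hs1 := abs_le.mp hs
    set θ : ℝ := Real.arcsin s with hθ_def
    have hsin : Real.sin θ = s := Real.sin_arcsin hs1.1 hs1.2
    have hcos0 : 0 ≤ Real.cos θ := Real.cos_arcsin s ▸ Real.sqrt_nonneg _
    have hcos1 : Real.cos θ ≤ 1 := Real.cos_le_one θ
    have hy2 : (y : ℂ) = 2 * k * Complex.sin θ := by
      rw [← Complex.ofReal_sin, hsin, hs_def]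
      push_cast
      field_simp
    have hsc : Complex.sin (θ : ℂ) ^ 2 + Complex.cos (θ : ℂ) ^ 2 = 1 :=
      Complex.sin_sq_add_cos_sq _
    have harg : 1 + (Complex.I * y) ^ 2 / (2 * (k : ℂ) ^ 2) = Complex.cos (2 * (θ : ℂ)) := by
      rw [Complex.cos_two_mul, mul_pow, Complex.I_sq, hy2]
      field_simp
      linear_combination (-2) * hsc
    have hT := Polynomial.Chebyshev.T_complex_cos (2 * (θ : ℂ)) (k : ℤ)
    have hUc := Polynomial.Chebyshev.U_complex_cos (2 * (θ : ℂ)) ((k : ℤ) - 1)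
    push_cast at hT hUc
    rw [show ((k:ℂ) - 1 + 1) = (k:ℂ) by ring] at hUc
    have hcoef : Complex.I * (y:ℂ) / (k:ℂ) * (1 + (Complex.I * y) ^ 2 / (4 * (k : ℂ) ^ 2)) =
        Complex.I * Complex.cos (θ : ℂ) * Complex.sin (2 * (θ : ℂ)) := by
      rw [Complex.sin_two_mul, mul_pow, Complex.I_sq, hy2]
      field_simp
      ring_nf
      linear_combination (-4 * Complex.sin (θ:ℂ)) * hsc
    have hval : P (Complex.I * y) =
        Complex.cos ((k : ℂ) * (2 * θ)) +
        Complex.I * Complex.cos (θ : ℂ) * Complex.sin ((k : ℂ) * (2 * θ)) := by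
      rw [hP, harg, hT, hcoef]
      linear_combination (Complex.I * Complex.cos (θ : ℂ)) * hUc
    have hval2 : P (Complex.I * y) =
        ((Real.cos (k * (2 * θ)) : ℝ) : ℂ) +
        ((Real.cos θ * Real.sin (k * (2 * θ)) : ℝ) : ℂ) * Complex.I := by
      rw [hval]
      push_cast
      ring
    rw [hval2, Complex.norm_add_mul_I]
    have hb : Real.cos (k * (2 * θ)) ^ 2 + (Real.cos θ * Real.sin (k * (2 * θ))) ^ 2 ≤ 1 := by
      have hc2 : Real.cos θ ^ 2 ≤ 1 := by nlinarith
      nlinarith [Real.sin_sq_add_cos_sq ((k : ℝ) * (2 * θ)), sq_nonneg (Real.sin ((k : ℝ) * (2 * θ))), hc2]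
    calc Real.sqrt (Real.cos (k * (2 * θ)) ^ 2 + (Real.cos θ * Real.sin (k * (2 * θ))) ^ 2)
        ≤ Real.sqrt 1 := Real.sqrt_le_sqrt hb
      _ = 1 := Real.sqrt_one
end
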